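/- Let R and S be commutative rings with unity, f : R → S a ring homomorphism, and J a proper ideal of S with J ⊆ f(R). Then the amalgamation R ⋈^f J is an arithmetical ring if and only if R is an arithmetical ring, the localization J_m (of J as an R-module via f) is zero for every maximal ideal m of R containing f⁻¹(J), and the localization S_q is a chain ring for every maximal ideal q of S not containing J. -/

import Mathlib

/-!
Chain rings are Mathlib's `PreValuationRing`s (divisibility, equivalently inclusion of ideals,
is total).

The maximal ideals of `A = R ⋈^f J` are the `fst⁻¹(p)` with `p` maximal in `R` (those containing
`ker fst = 0 × J`) and the `snd⁻¹(q)` with `q` maximal in `S` and `J ⊄ q`. At `snd⁻¹(q)` one has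
`A_M ≅ S_q`: any `j₀ ∈ J \ q` becomes a unit, `j₀ S ⊆ snd(A)`, and `(0, j₀)` kills `ker snd`.
At `fst⁻¹(p)` the map `A_M → R_p` is onto, and it is injective once `0 × J` is killed by elements
outside `fst⁻¹(p)`: use `(i, 0)` with `f i ∈ J`, `i ∉ p` if `f⁻¹(J) ⊄ p`, and `J_p = 0` otherwise.
Conversely, if `A_M` is a chain ring and `f⁻¹(J) ⊆ p`, then for `j = f i ∈ J` one of `(0, j)` and
`(i, 0)` divides the other in `A_M`, and either way `j` is killed by some `f u` with `u ∉ p`.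
-/

open Pointwise

/-- The amalgamation `R ⋈^f J` of `R` with `S` along the ideal `J` with respect to
`f : R →+* S`, as a subring of `R × S`. -/
def amalgamation {R S : Type*} [CommRing R] [CommRing S] (f : R →+* S) (J : Ideal S) :
    Subring (R × S) where
  carrier := {p | ∃ j ∈ J, p.2 = f p.1 + j}
  zero_mem' := ⟨0, J.zero_mem, by simp⟩
  one_mem' := ⟨0, J.zero_mem, by simp⟩
  add_mem' := by
    rintro ⟨a, a'⟩ ⟨b, b'⟩ ⟨j, hj, h1⟩ ⟨k, hk, h2⟩
    exact ⟨j + k, J.add_mem hj hk, by simp_all; ring⟩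
  neg_mem' := by
    rintro ⟨a, a'⟩ ⟨j, hj, h1⟩
    exact ⟨-j, J.neg_mem hj, by simp_all; ring⟩
  mul_mem' := by
    rintro ⟨a, a'⟩ ⟨b, b'⟩ ⟨j, hj, h1⟩ ⟨k, hk, h2⟩
    refine ⟨f a * k + j * f b + j * k, ?_, by simp_all; ring⟩
    exact J.add_mem (J.add_mem (J.mul_mem_left _ hk) (J.mul_mem_right _ hj))
      (J.mul_mem_right _ hj)

/-- A commutative ring is arithmetical if it is locally a chain ring, i.e. the ideals of
the localization at every maximal ideal are totally ordered by inclusion. -/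
def IsArithmeticalRing (A : Type*) [CommRing A] : Prop :=
  ∀ (m : Ideal A) [m.IsMaximal],
    ∀ I I' : Ideal (Localization.AtPrime m), I ≤ I' ∨ I' ≤ I

theorem preValuationRing_iff_forall_le_or_le {A : Type*} [CommRing A] :
    PreValuationRing A ↔ ∀ I I' : Ideal A, I ≤ I' ∨ I' ≤ I :=
  PreValuationRing.iff_ideal_total.trans ⟨fun h => h.total, fun h => ⟨h⟩⟩

theorem isArithmeticalRing_iff {A : Type*} [CommRing A] :
    IsArithmeticalRing A ↔
      ∀ (m : Ideal A) [m.IsMaximal], PreValuationRing (Localization.AtPrime m) := by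
  simp only [IsArithmeticalRing, preValuationRing_iff_forall_le_or_le]

theorem PreValuationRing.of_surjective {A B : Type*} [CommRing A] [CommRing B] (g : A →+* B)
    (hg : Function.Surjective g) [PreValuationRing A] : PreValuationRing B :=
  hg.preValuationRing (g : A →ₙ* B)

theorem preValuationRing_iff_of_bijective {A B : Type*} [CommRing A] [CommRing B] (g : A →+* B)
    (hg : Function.Bijective g) : PreValuationRing A ↔ PreValuationRing B :=
  ⟨fun _ => .of_surjective g hg.2, fun _ =>
    .of_surjective (RingEquiv.ofBijective g hg).symm.toRingHom (RingEquiv.surjective _)⟩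

theorem IsLocalization.exists_dvd_mul_of_algebraMap_dvd {A L : Type*} [CommRing A] [CommRing L]
    [Algebra A L] (M : Submonoid A) [IsLocalization M L] {x y : A}
    (h : algebraMap A L x ∣ algebraMap A L y) : ∃ s ∈ M, x ∣ s * y := by
  rw [← Ideal.mem_span_singleton, ← Set.image_singleton, ← Ideal.map_span,
    IsLocalization.algebraMap_mem_map_algebraMap_iff M] at h
  simpa only [Ideal.mem_span_singleton] using h

theorem LocalizedModule.subsingleton_compHom_iff {R S N : Type*} [CommRing R] [Semiring S]
    [AddCommMonoid N] [Module S N] (f : R →+* S) (T : Submonoid R) :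
    (letI : Module R N := Module.compHom N f
     Subsingleton (LocalizedModule T N)) ↔ ∀ x : N, ∃ u ∈ T, f u • x = 0 :=
  letI : Module R N := Module.compHom N f
  LocalizedModule.subsingleton_iff

namespace Localization

variable {A B : Type*} [CommRing A] [CommRing B] (g : A →+* B) (Q : Ideal B) [Q.IsPrime]

theorem localRingHom_comap_surjective (hsurj : ∀ b, ∃ a t, g t ∉ Q ∧ g a = g t * b) :
    Function.Surjective (localRingHom (Q.comap g) Q g rfl) :=
  (RingHom.surjective_localRingHom_iff Q).2 fun b => by
    obtain ⟨a, t, ht, hb⟩ := hsurj b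
    exact ⟨a, t, 1, Q.one_notMem, ht, by rw [one_mul, one_mul, hb]⟩

theorem localRingHom_comap_bijective (hsurj : ∀ b, ∃ a t, g t ∉ Q ∧ g a = g t * b)
    (hker : ∀ a, g a = 0 → ∃ c, g c ∉ Q ∧ c * a = 0) :
    Function.Bijective (localRingHom (Q.comap g) Q g rfl) := by
  refine ⟨(injective_iff_map_eq_zero _).2 fun x hx => ?_,
    localRingHom_comap_surjective g Q hsurj⟩
  obtain ⟨⟨a, t⟩, rfl⟩ := IsLocalization.mk'_surjective (Q.comap g).primeCompl x
  rw [localRingHom_mk', IsLocalization.mk'_eq_zero_iff] at hx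
  obtain ⟨⟨u, hu⟩, hua⟩ := hx
  obtain ⟨a', t', ht', hgt'⟩ := hsurj u
  obtain ⟨c, hc, hca⟩ := hker (a' * a) (by rw [map_mul, hgt', mul_assoc, hua, mul_zero])
  rw [IsLocalization.mk'_eq_zero_iff]
  refine ⟨⟨c * a', ?_⟩, by rw [mul_assoc, hca]⟩
  change g (c * a') ∉ Q
  rw [map_mul, hgt']
  exact Ideal.IsPrime.mul_notMem ‹_› hc (Ideal.IsPrime.mul_notMem ‹_› ht' hu)

end Localization

namespace amalgamation

open Localization

variable {R S : Type*} [CommRing R] [CommRing S] (f : R →+* S) (J : Ideal S)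

def fst : amalgamation f J →+* R := (RingHom.fst R S).comp (amalgamation f J).subtype

def snd : amalgamation f J →+* S := (RingHom.snd R S).comp (amalgamation f J).subtype

def diag : R →+* amalgamation f J :=
  ((RingHom.id R).prod f).codRestrict _ fun _ => ⟨0, J.zero_mem, (add_zero _).symm⟩

def inr : J →+ amalgamation f J where
  toFun j := ⟨(0, j), j, j.2, by simp⟩
  map_zero' := rfl
  map_add' _ _ := Subtype.ext (Prod.ext (add_zero 0).symm rfl)

variable {f J}

@[simp] theorem fst_diag (r : R) : fst f J (diag f J r) = r := rfl
@[simp] theorem snd_diag (r : R) : snd f J (diag f J r) = f r := rfl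
@[simp] theorem fst_inr (j : J) : fst f J (inr f J j) = 0 := rfl
@[simp] theorem snd_inr (j : J) : snd f J (inr f J j) = j := rfl

theorem ext {a b : amalgamation f J} (h₁ : fst f J a = fst f J b) (h₂ : snd f J a = snd f J b) :
    a = b :=
  Subtype.ext (Prod.ext h₁ h₂)

theorem inr_mul (j : J) (a : amalgamation f J) : inr f J j * a = inr f J (snd f J a • j) :=
  ext (by simp) (by simp [mul_comm])

theorem exists_inr_eq_of_fst_eq_zero {a : amalgamation f J} (h : fst f J a = 0) :
    ∃ j, inr f J j = a := by
  obtain ⟨j, hj, ha⟩ := a.2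
  refine ⟨⟨j, hj⟩, ext h.symm ?_⟩
  change j = a.1.2
  rw [ha, show a.1.1 = 0 from h, map_zero, zero_add]

theorem exists_map_eq_snd (hJf : (J : Set S) ⊆ Set.range f) (a : amalgamation f J) :
    ∃ r, f r = snd f J a ∧ r - fst f J a ∈ J.comap f := by
  obtain ⟨j, hj, ha⟩ := a.2
  obtain ⟨i, rfl⟩ := hJf hj
  exact ⟨a.1.1 + i, by simp [snd, ha], by simpa [fst] using hj⟩

variable (f J)

theorem fst_surjective : Function.Surjective (fst f J) := fun r => ⟨diag f J r, rfl⟩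

theorem exists_isMaximal_comap_fst_eq (M : Ideal (amalgamation f J)) [M.IsMaximal]
    (hM : RingHom.ker (fst f J) ≤ M) : ∃ p : Ideal R, p.IsMaximal ∧ p.comap (fst f J) = M :=
  ⟨M.map (fst f J), Ideal.IsMaximal.map_of_surjective_of_ker_le (fst_surjective f J) hM, by
    rw [Ideal.comap_map_of_surjective _ (fst_surjective f J), ← RingHom.ker_eq_comap_bot,
      sup_of_le_left hM]⟩

theorem exists_isMaximal_comap_snd_eq (M : Ideal (amalgamation f J)) [hM : M.IsMaximal]
    (hker : ¬ RingHom.ker (fst f J) ≤ M) :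
    ∃ q : Ideal S, q.IsMaximal ∧ ¬ J ≤ q ∧ q.comap (snd f J) = M := by
  obtain ⟨a, ha, haM⟩ := SetLike.not_le_iff_exists.mp hker
  obtain ⟨j₀, rfl⟩ := exists_inr_eq_of_fst_eq_zero ha
  -- closed under multiplication by `S` because `M` is prime and `inr j₀ ∉ M`
  let q₀ : Ideal S :=
    { carrier := {s | inr f J (s • j₀) ∈ M}
      add_mem' := fun {s t} (hs : inr f J (s • j₀) ∈ M) ht => by
        change inr f J ((s + t) • j₀) ∈ M
        rw [add_smul, map_add]
        exact M.add_mem hs ht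
      zero_mem' := by simp
      smul_mem' := fun c s hs => by
        have h :
            inr f J j₀ * inr f J ((c * s) • j₀) = inr f J (c • j₀) * inr f J (s • j₀) := by
          simp only [inr_mul, snd_inr]
          congr 1
          ext
          simp only [SetLike.val_smul, smul_eq_mul]
          ring
        exact (hM.isPrime.mem_or_mem (h ▸ M.mul_mem_left _ hs)).resolve_left haM }
  have hq₀ : q₀ ≠ ⊤ := (Ideal.ne_top_iff_one q₀).2 (by simpa [q₀] using haM)
  obtain ⟨q, hq, hq₀q⟩ := q₀.exists_le_maximal hq₀
  have hMq : M ≤ q.comap (snd f J) := fun a ha => hq₀q <| by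
    change inr f J (snd f J a • j₀) ∈ M
    rw [← inr_mul]
    exact M.mul_mem_left _ ha
  have hqM : q.comap (snd f J) = M := (hM.eq_of_le (Ideal.comap_ne_top _ hq.ne_top) hMq).symm
  exact ⟨q, hq, fun hJq => haM (hqM ▸ hJq j₀.2), hqM⟩

theorem isMaximal_comap_snd (q : Ideal S) [q.IsMaximal] (hq : ¬ J ≤ q) :
    (q.comap (snd f J)).IsMaximal := by
  obtain ⟨j₀, hj₀, hj₀q⟩ := SetLike.not_le_iff_exists.mp hq
  obtain ⟨y, i, hi, hy⟩ := Ideal.IsMaximal.exists_inv ‹_› hj₀q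
  have hsurj : Function.Surjective ((Ideal.Quotient.mk q).comp (snd f J)) := fun z => by
    obtain ⟨s, rfl⟩ := Ideal.Quotient.mk_surjective z
    refine ⟨inr f J ((s * y) • ⟨j₀, hj₀⟩), Ideal.Quotient.eq.2 ?_⟩
    convert q.mul_mem_left (-s) hi using 1
    simp only [snd_inr, SetLike.val_smul, smul_eq_mul]
    linear_combination s * hy
  let _ : Field (S ⧸ q) := Ideal.Quotient.field q
  rw [← Ideal.mk_ker (I := q), RingHom.comap_ker]
  exact RingHom.ker_isMaximal_of_surjective _ hsurj

theorem localRingHom_fst_surjective (p : Ideal R) [p.IsPrime] :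
    Function.Surjective (localRingHom (p.comap (fst f J)) p (fst f J) rfl) :=
  localRingHom_comap_surjective _ _ fun r =>
    ⟨diag f J r, 1, by simpa using p.one_notMem, by simp⟩

theorem localRingHom_fst_bijective (p : Ideal R) [p.IsPrime]
    (hp : J.comap f ≤ p → ∀ j : J, ∃ u ∈ p.primeCompl, f u • j = 0) :
    Function.Bijective (localRingHom (p.comap (fst f J)) p (fst f J) rfl) := by
  refine localRingHom_comap_bijective _ _
    (fun r => ⟨diag f J r, 1, by simpa using p.one_notMem, by simp⟩) fun a ha => ?_
  obtain ⟨j, rfl⟩ := exists_inr_eq_of_fst_eq_zero ha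
  by_cases hJp : J.comap f ≤ p
  · obtain ⟨u, hu, hj⟩ := hp hJp j
    exact ⟨diag f J u, hu, by rw [mul_comm, inr_mul, snd_diag, hj, map_zero]⟩
  · obtain ⟨i, hi, hip⟩ := SetLike.not_le_iff_exists.mp hJp
    refine ⟨diag f J i - inr f J ⟨f i, hi⟩, by simpa using hip, ?_⟩
    rw [mul_comm, inr_mul]
    simp

theorem localRingHom_snd_bijective (q : Ideal S) [q.IsPrime] (hq : ¬ J ≤ q) :
    Function.Bijective (localRingHom (q.comap (snd f J)) q (snd f J) rfl) := by
  obtain ⟨j₀, hj₀, hj₀q⟩ := SetLike.not_le_iff_exists.mp hq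
  set e := inr f J ⟨j₀, hj₀⟩
  refine localRingHom_comap_bijective _ _
    (fun b => ⟨inr f J (b • ⟨j₀, hj₀⟩), e, hj₀q, by simp [e, mul_comm]⟩)
    fun a ha => ⟨e, hj₀q, by rw [inr_mul, ha, zero_smul, map_zero]⟩

theorem exists_mem_primeCompl_smul_eq_zero (hJf : (J : Set S) ⊆ Set.range f) (m : Ideal R)
    [m.IsPrime] (hm : J.comap f ≤ m) [PreValuationRing (Localization.AtPrime (m.comap (fst f J)))]
    (j : J) : ∃ u ∈ m.primeCompl, f u • j = 0 := by
  set P := m.comap (fst f J)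
  obtain ⟨i, hi⟩ := hJf j.2
  -- compare `inr j = (0, j)` with `y = (i, 0)` in the chain ring `A_P`
  set y := diag f J i - inr f J j
  rcases ValuationRing.dvd_total (algebraMap _ (Localization.AtPrime P) (inr f J j))
    (algebraMap _ _ y) with h | h
  · obtain ⟨s, hs, c, hc⟩ := IsLocalization.exists_dvd_mul_of_algebraMap_dvd P.primeCompl h
    refine ⟨fst f J s, hs, Subtype.ext ?_⟩
    have := congrArg (fst f J) hc
    simp only [map_mul, map_sub, fst_diag, fst_inr, sub_zero, zero_mul, y] at this
    simp [← hi, ← map_mul, this]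
  · obtain ⟨s, hs, c, hc⟩ := IsLocalization.exists_dvd_mul_of_algebraMap_dvd P.primeCompl h
    obtain ⟨r, hr, hrs⟩ := exists_map_eq_snd hJf s
    refine ⟨r, fun hrm => hs (show fst f J s ∈ m by simpa using m.sub_mem hrm (hm hrs)),
      Subtype.ext ?_⟩
    have := congrArg (snd f J) hc
    simp only [map_mul, snd_inr, map_sub, snd_diag, hi, sub_self, zero_mul, y] at this
    simp [hr, this]

end amalgamation

open amalgamation in
theorem stmt19_general {R S : Type*} [CommRing R] [CommRing S] (f : R →+* S) (J : Ideal S)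
    (hJf : (J : Set S) ⊆ Set.range f) :
    IsArithmeticalRing (amalgamation f J) ↔
      (IsArithmeticalRing R ∧
        (∀ (m : Ideal R) [m.IsMaximal], Ideal.comap f J ≤ m →
          letI : Module R J := Module.compHom J f
          Subsingleton (LocalizedModule m.primeCompl J)) ∧
        (∀ (q : Ideal S) [q.IsMaximal], ¬ J ≤ q →
          ∀ I I' : Ideal (Localization.AtPrime q), I ≤ I' ∨ I' ≤ I)) := by
  simp only [isArithmeticalRing_iff, ← preValuationRing_iff_forall_le_or_le,
    LocalizedModule.subsingleton_compHom_iff]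
  constructor
  · intro hA
    have hA_fst (m : Ideal R) [m.IsMaximal] :
        PreValuationRing (Localization.AtPrime (m.comap (fst f J))) :=
      have := Ideal.comap_isMaximal_of_surjective _ (fst_surjective f J) (K := m)
      hA _
    refine ⟨fun m _ => .of_surjective _ (localRingHom_fst_surjective f J m),
      fun m _ hm => exists_mem_primeCompl_smul_eq_zero f J hJf m hm, fun q _ hq => ?_⟩
    have := isMaximal_comap_snd f J q hq
    exact (preValuationRing_iff_of_bijective _ (localRingHom_snd_bijective f J q hq)).1 (hA _)
  · rintro ⟨hR, hJ, hS⟩ M _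
    by_cases hM : RingHom.ker (fst f J) ≤ M
    · obtain ⟨p, _, rfl⟩ := exists_isMaximal_comap_fst_eq f J M hM
      exact (preValuationRing_iff_of_bijective _ (localRingHom_fst_bijective f J p (hJ p))).2 (hR p)
    · obtain ⟨q, _, hq, rfl⟩ := exists_isMaximal_comap_snd_eq f J M hM
      exact (preValuationRing_iff_of_bijective _ (localRingHom_snd_bijective f J q hq)).2 (hS q hq)

theorem stmt19 {R S : Type*} [CommRing R] [CommRing S] (f : R →+* S) (J : Ideal S)
    (hJ : J ≠ ⊤) (hJf : (J : Set S) ⊆ Set.range f) :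
    IsArithmeticalRing (amalgamation f J) ↔
      (IsArithmeticalRing R ∧
        (∀ (m : Ideal R) [m.IsMaximal], Ideal.comap f J ≤ m →
          letI : Module R J := Module.compHom J f
          Subsingleton (LocalizedModule m.primeCompl J)) ∧
        (∀ (q : Ideal S) [q.IsMaximal], ¬ J ≤ q →
          ∀ I I' : Ideal (Localization.AtPrime q), I ≤ I' ∨ I' ≤ I)) :=
  stmt19_general f J hJf
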